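/- arXiv:2003.14204 — 3 statements merged into one kernel-verified Lean document; each statement's English description precedes it below -/
import Mathlib

section
/- Let N = (P, T, Pre, Post) be an acyclic Petri net, let M : P → ℕ be a marking, and let y ∈ ℕ^T. Then the integer vector M + C·y is componentwise nonnegative (hence a marking M') if and only if there exists a finite sequence σ ∈ T* with firing vector φ(σ) = y such that σ is enabled at M and M[σ⟩M'. -/
open scoped BigOperators

/-- A Petri net over places `P` and transitions `T`. -/
structure PetriNet (P T : Type) where
  Pre : P → T → ℕ
  Post : P → T → ℕ

namespace PetriNet

variable {P T : Type}

/-- Incidence matrix `C = Post − Pre` (integer valued). -/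
def C (N : PetriNet P T) (p : P) (t : T) : ℤ :=
  (N.Post p t : ℤ) - (N.Pre p t : ℤ)

/-- A transition `t` is enabled at marking `M`. -/
def Enabled (N : PetriNet P T) (M : P → ℕ) (t : T) : Prop :=
  ∀ p, N.Pre p t ≤ M p

/-- `Fires N M σ M'` means the sequence `σ` is enabled at `M` and its firing
yields `M'`, i.e. `M[σ⟩M'`. -/
inductive Fires (N : PetriNet P T) : (P → ℕ) → List T → (P → ℕ) → Prop
  | nil (M : P → ℕ) : Fires N M [] M
  | cons {M M' M'' : P → ℕ} {t : T} {σ : List T} :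
      N.Enabled M t →
      (∀ p, M' p = M p + N.Post p t - N.Pre p t) →
      Fires N M' σ M'' →
      Fires N M (t :: σ) M''

/-- The reachability set `R(N, M0)`. -/
def Reach (N : PetriNet P T) (M0 : P → ℕ) : Set (P → ℕ) :=
  {M | ∃ σ : List T, N.Fires M0 σ M}

/-- Arcs of the underlying directed graph on `P ⊕ T`, where only transitions
in `TI` are kept (the `TI`-induced subnet). -/
def Arc (N : PetriNet P T) (TI : Set T) : (P ⊕ T) → (P ⊕ T) → Prop
  | Sum.inl p, Sum.inr t => t ∈ TI ∧ 0 < N.Pre p t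
  | Sum.inr t, Sum.inl p => t ∈ TI ∧ 0 < N.Post p t
  | _, _ => False

/-- The `TI`-induced subnet is acyclic: no directed cycle in its graph. -/
def AcyclicOn (N : PetriNet P T) (TI : Set T) : Prop :=
  ∀ x, ¬ Relation.TransGen (N.Arc TI) x x

/-- `(TE, TI)` is a basis partition: `TE` and `TI` partition `T` and the
`TI`-induced subnet is acyclic. -/
def IsBasisPartition (N : PetriNet P T) (TE TI : Set T) : Prop :=
  (∀ t, t ∈ TE ↔ t ∉ TI) ∧ N.AcyclicOn TI

/-- Boundedness of the marked net `⟨N, M0⟩`. -/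
def Bounded (N : PetriNet P T) (M0 : P → ℕ) : Prop :=
  ∃ k : ℕ, ∀ M ∈ N.Reach M0, ∀ p, M p ≤ k

/-- A marking is dead if no transition is enabled at it. -/
def Dead (N : PetriNet P T) (M : P → ℕ) : Prop :=
  ∀ t : T, ¬ N.Enabled M t

/-- The set `Σ(M, t)` of explanations of `t` at `M`: implicit sequences whose
firing from `M` yields a marking enabling `t`. -/
def Expl (N : PetriNet P T) (TI : Set T) (M : P → ℕ) (t : T) : Set (List T) :=
  {σ | (∀ u ∈ σ, u ∈ TI) ∧ ∃ M', N.Fires M σ M' ∧ ∀ p, N.Pre p t ≤ M' p}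

/-- The set `Σ_min(M, t)` of minimal explanations of `t` at `M`. -/
def ExplMin [DecidableEq T] (N : PetriNet P T) (TI : Set T) (M : P → ℕ) (t : T) :
    Set (List T) :=
  {σ | σ ∈ N.Expl TI M t ∧
    ¬ ∃ σ' ∈ N.Expl TI M t,
      (∀ u, σ'.count u ≤ σ.count u) ∧ ∃ u, σ'.count u ≠ σ.count u}

/-- The set `Σ_max(M, t)` of maximal explanations of `t` at `M`. -/
def ExplMax [DecidableEq T] (N : PetriNet P T) (TI : Set T) (M : P → ℕ) (t : T) :
    Set (List T) :=
  {σ | σ ∈ N.Expl TI M t ∧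
    ¬ ∃ σ' ∈ N.Expl TI M t,
      (∀ u, σ.count u ≤ σ'.count u) ∧ ∃ u, σ'.count u ≠ σ.count u}

/-- `Y_min(M, t)`: firing vectors of minimal explanations. -/
def Ymin [DecidableEq T] (N : PetriNet P T) (TI : Set T) (M : P → ℕ) (t : T) :
    Set (T → ℕ) :=
  {y | ∃ σ ∈ N.ExplMin TI M t, ∀ u, σ.count u = y u}

/-- `Y_max(M, t)`: firing vectors of maximal explanations. -/
def Ymax [DecidableEq T] (N : PetriNet P T) (TI : Set T) (M : P → ℕ) (t : T) :
    Set (T → ℕ) :=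
  {y | ∃ σ ∈ N.ExplMax TI M t, ∀ u, σ.count u = y u}

/-- The set of basis markings `M_B` (smallest set containing `M0` and closed
under minimal-explanation steps). -/
inductive Basis [DecidableEq T] [Fintype T] (N : PetriNet P T) (TE TI : Set T)
    (M0 : P → ℕ) : (P → ℕ) → Prop
  | base : Basis N TE TI M0 M0
  | step {M M' : P → ℕ} {t : T} {y : T → ℕ} :
      Basis N TE TI M0 M →
      t ∈ TE →
      y ∈ N.Ymin TI M t →
      (∀ p, (M' p : ℤ) = (M p : ℤ) + (∑ u, N.C p u * y u) + N.C p t) →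
      Basis N TE TI M0 M'

/-- The set of minimax basis markings `M_BM` (smallest set containing `M0` and
closed under minimal- or maximal-explanation steps). -/
inductive Minimax [DecidableEq T] [Fintype T] (N : PetriNet P T) (TE TI : Set T)
    (M0 : P → ℕ) : (P → ℕ) → Prop
  | base : Minimax N TE TI M0 M0
  | step {M M' : P → ℕ} {t : T} {y : T → ℕ} :
      Minimax N TE TI M0 M →
      t ∈ TE →
      (y ∈ N.Ymin TI M t ∨ y ∈ N.Ymax TI M t) →
      (∀ p, (M' p : ℤ) = (M p : ℤ) + (∑ u, N.C p u * y u) + N.C p t) →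
      Minimax N TE TI M0 M'

/-- The implicit reach `R_I(M_b)`: markings reachable from `M_b` by firing
only implicit transitions. -/
def ReachI (N : PetriNet P T) (TI : Set T) (Mb : P → ℕ) : Set (P → ℕ) :=
  {M | ∃ σ : List T, (∀ u ∈ σ, u ∈ TI) ∧ N.Fires Mb σ M}

/-- One step of the minimax-BRG: `M1 ⇒ M2`. -/
def BrgStep [DecidableEq T] [Fintype T] (N : PetriNet P T) (TE TI : Set T)
    (M1 M2 : P → ℕ) : Prop :=
  ∃ t ∈ TE, ∃ y : T → ℕ, (y ∈ N.Ymin TI M1 t ∨ y ∈ N.Ymax TI M1 t) ∧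
    ∀ p, (M2 p : ℤ) = (M1 p : ℤ) + (∑ u, N.C p u * y u) + N.C p t

/-- One step of the BRG using only minimal explanations. -/
def MinBrgStep [DecidableEq T] [Fintype T] (N : PetriNet P T) (TE TI : Set T)
    (M1 M2 : P → ℕ) : Prop :=
  ∃ t ∈ TE, ∃ y ∈ N.Ymin TI M1 t,
    ∀ p, (M2 p : ℤ) = (M1 p : ℤ) + (∑ u, N.C p u * y u) + N.C p t

/-- The minimax-BRG is unobstructed: every minimax basis marking can reach, by
BRG-steps, an i-coreachable minimax basis marking. -/
def Unobstructed [DecidableEq T] [Fintype T] (N : PetriNet P T) (TE TI : Set T)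
    (M0 : P → ℕ) (MF : Set (P → ℕ)) : Prop :=
  ∀ Mb, N.Minimax TE TI M0 Mb →
    ∃ Mb', Relation.ReflTransGen (N.BrgStep TE TI) Mb Mb' ∧
      N.Minimax TE TI M0 Mb' ∧ (N.ReachI TI Mb' ∩ MF).Nonempty

/-- `Σ_I,max(M)`: maximal implicit firing sequences at `M`. -/
def ImplMax [DecidableEq T] (N : PetriNet P T) (TI : Set T) (M : P → ℕ) :
    Set (List T) :=
  {σ | (∀ u ∈ σ, u ∈ TI) ∧ (∃ M', N.Fires M σ M') ∧
    ¬ ∃ σ' : List T, (∀ u ∈ σ', u ∈ TI) ∧ (∃ M', N.Fires M σ' M') ∧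
      (∀ u, σ.count u ≤ σ'.count u) ∧ ∃ u, σ'.count u ≠ σ.count u}

/-- `Y_I,max(M)`: firing vectors of maximal implicit firing sequences. -/
def YImax [DecidableEq T] (N : PetriNet P T) (TI : Set T) (M : P → ℕ) :
    Set (T → ℕ) :=
  {y | ∃ σ ∈ N.ImplMax TI M, ∀ u, σ.count u = y u}

end PetriNet

/-! Acyclicity makes the relation "`u` puts tokens into an input place of `t`" well founded, so
the support of `y` contains a transition `m` that no transition of the support feeds. At an input
place `p` of `m` the vector `y` then only consumes, and `0 ≤ M p + (C·y) p` gives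
`Pre p m ≤ ∑ₜ Pre p t * y t ≤ M p`: `m` is enabled. Firing it leaves `M + C·e_m` and `y - e_m`,
which satisfy the same inequality, and induction on `∑ₜ y t` produces the sequence. -/

namespace PetriNet

variable {P T : Type}

def Feeds (N : PetriNet P T) (u t : T) : Prop :=
  ∃ p, 0 < N.Post p u ∧ 0 < N.Pre p t

def fire (N : PetriNet P T) (M : P → ℕ) (t : T) : P → ℕ :=
  fun p => M p + N.Post p t - N.Pre p t

lemma transGen_arc_of_transGen_feeds {N : PetriNet P T} {u t : T}
    (h : Relation.TransGen N.Feeds u t) :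
    Relation.TransGen (N.Arc Set.univ) (.inr u) (.inr t) :=
  h.lift' Sum.inr fun u t ⟨p, hpost, hpre⟩ =>
    .head (show N.Arc Set.univ (.inr u) (.inl p) from ⟨trivial, hpost⟩)
      (.single (show N.Arc Set.univ (.inl p) (.inr t) from ⟨trivial, hpre⟩))

lemma AcyclicOn.wellFounded_feeds [Finite T] {N : PetriNet P T}
    (hacyc : N.AcyclicOn Set.univ) : WellFounded N.Feeds :=
  have : Std.Irrefl (Relation.TransGen N.Feeds) :=
    ⟨fun _ h => hacyc _ (transGen_arc_of_transGen_feeds h)⟩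
  Subrelation.wf Relation.TransGen.single (Finite.wellFounded_of_trans_of_irrefl _)

section Fintype

variable [Fintype T] (N : PetriNet P T)

lemma sum_C_mul (p : P) (y : T → ℕ) :
    ∑ t, N.C p t * y t =
      ((∑ t, N.Post p t * y t : ℕ) : ℤ) - ((∑ t, N.Pre p t * y t : ℕ) : ℤ) := by
  push_cast
  rw [← Finset.sum_sub_distrib]
  exact Finset.sum_congr rfl fun t _ => sub_mul _ _ _

lemma enabled_of_forall_not_feeds {M : P → ℕ} {y : T → ℕ} {m : T}
    (hM : ∀ p, 0 ≤ (M p : ℤ) + ∑ t, N.C p t * y t) (hm : 0 < y m)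
    (hmin : ∀ u, 0 < y u → ¬ N.Feeds u m) : N.Enabled M m := by
  intro p
  rcases Nat.eq_zero_or_pos (N.Pre p m) with hpre | hpre
  · simp [hpre]
  have hpost : ∑ t, N.Post p t * y t = 0 := by
    refine Finset.sum_eq_zero fun u _ => ?_
    rcases Nat.eq_zero_or_pos (y u) with hu | hu
    · simp [hu]
    · simp [Nat.eq_zero_of_not_pos fun h => hmin u hu ⟨p, h, hpre⟩]
  have hconsumed : ∑ t, N.Pre p t * y t ≤ M p := by
    have := hM p
    rw [sum_C_mul, hpost] at this
    omega
  calc N.Pre p m ≤ N.Pre p m * y m := Nat.le_mul_of_pos_right _ hm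
    _ ≤ ∑ t, N.Pre p t * y t :=
      Finset.single_le_sum (f := fun t => N.Pre p t * y t) (fun _ _ => Nat.zero_le _)
        (Finset.mem_univ m)
    _ ≤ M p := hconsumed

lemma exists_enabled_of_nonneg (hacyc : N.AcyclicOn Set.univ) {M : P → ℕ} {y : T → ℕ}
    (hM : ∀ p, 0 ≤ (M p : ℤ) + ∑ t, N.C p t * y t) (hy : y ≠ 0) :
    ∃ m, 0 < y m ∧ N.Enabled M m := by
  obtain ⟨t, ht⟩ := Function.ne_iff.mp hy
  obtain ⟨m, hm, hmin⟩ :=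
    hacyc.wellFounded_feeds.has_min {t | 0 < y t} ⟨t, Nat.pos_of_ne_zero ht⟩
  exact ⟨m, hm, N.enabled_of_forall_not_feeds hM hm hmin⟩

end Fintype

lemma Enabled.cast_fire {N : PetriNet P T} {M : P → ℕ} {t : T} (h : N.Enabled M t) (p : P) :
    (N.fire M t p : ℤ) = M p + N.C p t := by
  have := h p
  simp only [fire, C]
  omega

lemma sum_C_mul_add_single [Fintype T] [DecidableEq T] (N : PetriNet P T) (p : P)
    (y : T → ℕ) (m : T) :
    ∑ t, N.C p t * ((y + Pi.single m 1 : T → ℕ) t : ℤ) = ∑ t, N.C p t * y t + N.C p m := by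
  simp [mul_add, Finset.sum_add_distrib, Pi.single_apply]

theorem exists_fires_of_nonneg [Fintype T] [DecidableEq T] (N : PetriNet P T)
    (hacyc : N.AcyclicOn Set.univ) (M : P → ℕ) (y : T → ℕ)
    (hM : ∀ p, 0 ≤ (M p : ℤ) + ∑ t, N.C p t * y t) :
    ∃ σ : List T, (∀ t, σ.count t = y t) ∧
      ∃ M' : P → ℕ, N.Fires M σ M' ∧ ∀ p, (M' p : ℤ) = (M p : ℤ) + ∑ t, N.C p t * y t := by
  obtain ⟨n, hn⟩ : ∃ n, ∑ t, y t = n := ⟨_, rfl⟩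
  induction n generalizing y M with
  | zero =>
    obtain rfl : y = 0 := funext fun t => by simpa using (Finset.sum_eq_zero_iff.mp hn) t
    exact ⟨[], by simp, M, .nil M, by simp⟩
  | succ n ih =>
    obtain ⟨m, hm, hen⟩ := N.exists_enabled_of_nonneg hacyc hM fun h => by simp [h] at hn
    obtain ⟨y, rfl⟩ : ∃ y', y = y' + Pi.single m 1 :=
      ⟨y - Pi.single m 1, funext fun t => by
        by_cases htm : t = m <;> simp [htm]; omega⟩
    simp only [sum_C_mul_add_single] at hM ⊢
    have hn : ∑ t, y t = n := by simpa [Finset.sum_add_distrib] using hn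
    obtain ⟨σ, hσ, M', hfires, hM'⟩ :=
      ih (M := N.fire M m) (y := y) (fun p => by rw [hen.cast_fire]; linarith [hM p]) hn
    refine ⟨m :: σ, fun t => ?_, M', .cons hen (fun _ => rfl) hfires, fun p => ?_⟩
    · simp [List.count_cons, hσ, Pi.single_apply, @eq_comm _ m t]
    · rw [hM', hen.cast_fire]
      ring

end PetriNet

open PetriNet in
/-- For an acyclic net, `M + C·y ≥ 0` iff there is a sequence
`σ` with firing vector `y`, enabled at `M`, leading to the marking
`M' = M + C·y`. -/
theorem statement0 {P T : Type} [Fintype T] [DecidableEq T]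
    (N : PetriNet P T) (hacyc : N.AcyclicOn Set.univ)
    (M : P → ℕ) (y : T → ℕ) :
    (∀ p, 0 ≤ (M p : ℤ) + ∑ t, N.C p t * y t) ↔
      ∃ σ : List T, (∀ t, σ.count t = y t) ∧
        ∃ M' : P → ℕ, N.Fires M σ M' ∧
          ∀ p, (M' p : ℤ) = (M p : ℤ) + ∑ t, N.C p t * y t := by
  refine ⟨N.exists_fires_of_nonneg hacyc M y, ?_⟩
  rintro ⟨σ, -, M', -, hM'⟩ p
  exact hM' p ▸ Int.natCast_nonneg _
end

section
/- Let ⟨N, M0⟩ be a bounded marked Petri net with a basis partition π = (T_E, T_I) such that every implicit transition has at least one input place (for every t ∈ T_I there is p ∈ P with Pre(p,t) > 0). Then for every M ∈ R(N, M0), the set { φ(σ) | σ ∈ T_I* and σ is enabled at M } of firing vectors of implicit firing sequences enabled at M is finite; in particular, the lengths of implicit firing sequences enabled at M are uniformly bounded. -/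
open scoped BigOperators

/-!
Acyclicity of the implicit subnet makes "`u` produces into an input place of `t`", closed
transitively, a well-founded order on transitions. Token conservation at an input place `p` of
an implicit transition `t` gives `#t ≤ M p + ∑ᵤ #u · Post p u` for every sequence fired from
`M` (`#u` the number of occurrences of `u`), and only predecessors `u` of `t` contribute to the
sum, so well-founded induction bounds the number of occurrences of each transition, hence the
firing vectors and the lengths.
-/

theorem List.sum_map_eq_sum_count {T : Type} [Fintype T] [DecidableEq T] (σ : List T)
    (f : T → ℕ) : (σ.map f).sum = ∑ u, σ.count u * f u := by
  rw [Finset.sum_list_map_count]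
  refine Finset.sum_subset (Finset.subset_univ _) fun u _ hu => ?_
  simp [List.count_eq_zero_of_not_mem (mt List.mem_toFinset.2 hu)]

theorem List.length_eq_sum_count {T : Type} [Fintype T] [DecidableEq T] (σ : List T) :
    σ.length = ∑ u, σ.count u := by
  simpa using σ.sum_map_eq_sum_count fun _ => 1

namespace PetriNet

variable {P T : Type} {N : PetriNet P T}

theorem Fires.add_sum_pre {M M' : P → ℕ} {σ : List T} (h : N.Fires M σ M') (p : P) :
    M' p + (σ.map (N.Pre p)).sum = M p + (σ.map (N.Post p)).sum := by
  induction h with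
  | nil => rfl
  | cons hen hstep _ ih =>
    have := hen p
    have := hstep p
    simp only [List.map_cons, List.sum_cons]
    omega

theorem Fires.count_le_of_pre_pos [Fintype T] [DecidableEq T] {M M' : P → ℕ} {σ : List T}
    (h : N.Fires M σ M') {p : P} {t : T} (hp : 0 < N.Pre p t) :
    σ.count t ≤ M p + ∑ u, σ.count u * N.Post p u := by
  have hconserve := h.add_sum_pre p
  have hconsumed : σ.count t ≤ (σ.map (N.Pre p)).sum := by
    rw [σ.sum_map_eq_sum_count]
    calc σ.count t ≤ σ.count t * N.Pre p t := Nat.le_mul_of_pos_right _ hp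
      _ ≤ ∑ u, σ.count u * N.Pre p u :=
        Finset.single_le_sum (f := fun u => σ.count u * N.Pre p u)
          (fun _ _ => Nat.zero_le _) (Finset.mem_univ t)
  rw [← σ.sum_map_eq_sum_count]
  omega

theorem AcyclicOn.wellFounded [Finite T] {TI : Set T} (h : N.AcyclicOn TI) :
    WellFounded fun u t : T => Relation.TransGen (N.Arc TI) (.inr u) (.inr t) :=
  haveI : IsTrans T fun u t => Relation.TransGen (N.Arc TI) (.inr u) (.inr t) :=
    ⟨fun _ _ _ => .trans⟩
  haveI : Std.Irrefl fun u t : T => Relation.TransGen (N.Arc TI) (.inr u) (.inr t) :=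
    ⟨fun t => h (.inr t)⟩
  Finite.wellFounded_of_trans_of_irrefl _

theorem AcyclicOn.exists_bound_count [Fintype T] [DecidableEq T] {TI : Set T}
    (hacyc : N.AcyclicOn TI) (hinput : ∀ t ∈ TI, ∃ p, 0 < N.Pre p t) (M : P → ℕ) :
    ∃ B : T → ℕ, ∀ σ : List T, (∀ u ∈ σ, u ∈ TI) → (∃ M', N.Fires M σ M') →
      ∀ t, σ.count t ≤ B t := by
  classical
  suffices ∀ t, ∃ b, ∀ σ : List T, (∀ u ∈ σ, u ∈ TI) → (∃ M', N.Fires M σ M') →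
      σ.count t ≤ b by
    choose B hB using this
    exact ⟨B, fun σ hσ hfires t => hB t σ hσ hfires⟩
  intro t
  induction t using hacyc.wellFounded.induction with
  | _ t ih =>
  by_cases ht : t ∈ TI
  · obtain ⟨p, hp⟩ := hinput t ht
    refine ⟨M p + ∑ u, (if h : _ then (ih u h).choose else 0) * N.Post p u, ?_⟩
    rintro σ hσ ⟨M', hfires⟩
    refine (hfires.count_le_of_pre_pos hp).trans (Nat.add_le_add_left ?_ _)
    refine Finset.sum_le_sum fun u _ => ?_
    rcases Nat.eq_zero_or_pos (σ.count u) with hcount | hcount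
    · simp [hcount]
    rcases Nat.eq_zero_or_pos (N.Post p u) with hpost | hpost
    · simp [hpost]
    have hprec : Relation.TransGen (N.Arc TI) (.inr u) (.inr t) :=
      .head (show N.Arc TI _ (.inl p) from ⟨hσ u (List.count_pos_iff.mp hcount), hpost⟩)
        (.single (show N.Arc TI _ _ from ⟨ht, hp⟩))
    rw [dif_pos hprec]
    exact Nat.mul_le_mul_right _ ((ih u hprec).choose_spec σ hσ ⟨M', hfires⟩)
  · exact ⟨0, fun σ hσ _ => (List.count_eq_zero_of_not_mem fun h => ht (hσ t h)).le⟩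

end PetriNet

open PetriNet in
theorem statement7_general {P T : Type} [Fintype T] [DecidableEq T]
    (N : PetriNet P T) (TE TI : Set T)
    (hbp : N.IsBasisPartition TE TI)
    (hinput : ∀ t ∈ TI, ∃ p : P, 0 < N.Pre p t)
    (M : P → ℕ) :
    ({y : T → ℕ | ∃ σ : List T, (∀ u ∈ σ, u ∈ TI) ∧
        (∃ M', N.Fires M σ M') ∧ ∀ u, σ.count u = y u}).Finite ∧
      ∃ L : ℕ, ∀ σ : List T, (∀ u ∈ σ, u ∈ TI) →
        (∃ M', N.Fires M σ M') → σ.length ≤ L := by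
  obtain ⟨B, hB⟩ := hbp.2.exists_bound_count hinput M
  refine ⟨(Set.finite_Iic B).subset ?_, ∑ u, B u, fun σ hσ hfires => ?_⟩
  · rintro y ⟨σ, hσ, hfires, hcount⟩ u
    exact hcount u ▸ hB σ hσ hfires u
  · rw [σ.length_eq_sum_count]
    exact Finset.sum_le_sum fun u _ => hB σ hσ hfires u

open PetriNet in
/-- In a bounded net whose implicit transitions all have an
input place, the set of firing vectors of implicit sequences enabled at any
reachable marking is finite; in particular their lengths are uniformly
bounded. -/
theorem statement7 {P T : Type} [Fintype T] [DecidableEq T]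
    (N : PetriNet P T) (M0 : P → ℕ) (TE TI : Set T)
    (hbp : N.IsBasisPartition TE TI) (hbnd : N.Bounded M0)
    (hinput : ∀ t ∈ TI, ∃ p : P, 0 < N.Pre p t)
    (M : P → ℕ) (hM : M ∈ N.Reach M0) :
    ({y : T → ℕ | ∃ σ : List T, (∀ u ∈ σ, u ∈ TI) ∧
        (∃ M', N.Fires M σ M') ∧ ∀ u, σ.count u = y u}).Finite ∧
      ∃ L : ℕ, ∀ σ : List T, (∀ u ∈ σ, u ∈ TI) →
        (∃ M', N.Fires M σ M') → σ.length ≤ L :=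
  statement7_general N TE TI hbp hinput M
end

section
/- Let ⟨N, M0⟩ be a bounded marked Petri net with a basis partition π = (T_E, T_I) and set of minimax basis markings M_BM. A marking M ∈ R(N, M0) is dead if and only if there exist a minimax basis marking M_b ∈ M_BM and a maximal implicit firing sequence σ ∈ Σ_I,max(M_b) such that M_b[σ⟩M and for every explicit transition t ∈ T_E, σ ∉ Σ_max(M_b, t). -/
open scoped BigOperators

/-!
Every reachable marking is reached from a basis marking by an implicit sequence: when an
explicit transition `t` fires after an implicit sequence `τ`, split off a minimal explanation
`σ ≤ τ` of `t` to get the next basis marking; the rest `τ - σ` can still be fired afterwards,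
because in an acyclic subnet every nonnegative solution of the state equation is firable.

The same fact gives the forward direction: if the dead marking `M` is reached from `Mb` by `τ`
and a strictly larger implicit sequence `σ'` were enabled at `Mb`, the surplus `σ' - τ` could be
fired at `M`. So `τ` is a maximal implicit sequence, and it explains no explicit transition.
Conversely, a transition enabled at `M` either extends `σ` (if implicit) or makes `σ` a
non-maximal explanation (if explicit); either way `σ` is not maximal among implicit sequences.
-/

namespace PetriNet

variable {P T : Type} {N : PetriNet P T}

section Firing

theorem Fires.unique {M M₁ M₂ : P → ℕ} {σ : List T}
    (h₁ : N.Fires M σ M₁) (h₂ : N.Fires M σ M₂) : M₁ = M₂ := by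
  induction h₁ generalizing M₂ with
  | nil => cases h₂; rfl
  | cons _ hM' _ ih =>
    cases h₂ with
    | cons _ hM'' h₂ =>
      obtain rfl : _ = _ := funext fun p => (hM' p).trans (hM'' p).symm
      exact ih h₂

theorem Fires.append {M M₁ M₂ : P → ℕ} {σ₁ σ₂ : List T}
    (h₁ : N.Fires M σ₁ M₁) (h₂ : N.Fires M₁ σ₂ M₂) :
    N.Fires M (σ₁ ++ σ₂) M₂ := by
  induction h₁ with
  | nil => exact h₂
  | cons ht hM' _ ih => exact .cons ht hM' (ih h₂)

theorem Fires.singleton {M : P → ℕ} {t : T} (ht : N.Enabled M t) :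
    N.Fires M [t] (fun p => M p + N.Post p t - N.Pre p t) :=
  .cons ht (fun _ => rfl) (.nil _)

theorem Enabled.natCast_fire {M M' : P → ℕ} {t : T} (ht : N.Enabled M t)
    (hM' : ∀ p, M' p = M p + N.Post p t - N.Pre p t) (p : P) :
    (M' p : ℤ) = M p + N.C p t := by
  have := ht p
  rw [hM' p, C]
  omega

/-- The marking change `C · y` caused by firing a multiset `m` of transitions; `y` is the
count function of `m`. -/
def effect (N : PetriNet P T) (m : Multiset T) (p : P) : ℤ :=
  (m.map (N.C p)).sum

theorem effect_zero (p : P) : N.effect 0 p = 0 := rfl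

theorem effect_cons (t : T) (m : Multiset T) (p : P) :
    N.effect (t ::ₘ m) p = N.C p t + N.effect m p := by
  simp [effect]

theorem effect_add (m m' : Multiset T) (p : P) :
    N.effect (m + m') p = N.effect m p + N.effect m' p := by
  simp [effect]

theorem effect_tsub [DecidableEq T] {m m' : Multiset T} (h : m ≤ m') (p : P) :
    N.effect (m' - m) p = N.effect m' p - N.effect m p := by
  rw [eq_sub_iff_add_eq', ← effect_add, add_tsub_cancel_of_le h]

theorem sum_C_mul_count [Fintype T] [DecidableEq T] (σ : List T) (p : P) :
    ∑ u, N.C p u * (σ.count u : ℤ) = N.effect σ p := by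
  calc ∑ u, N.C p u * (σ.count u : ℤ) = ∑ u ∈ σ.toFinset, N.C p u * (σ.count u : ℤ) :=
        (Finset.sum_subset (Finset.subset_univ _) fun u _ hu => by
          simp [List.count_eq_zero_of_not_mem (by simpa using hu)]).symm
    _ = N.effect σ p := by simp [effect, Finset.sum_list_map_count, mul_comm]

theorem Fires.state_equation {M M' : P → ℕ} {σ : List T} (h : N.Fires M σ M') (p : P) :
    (M' p : ℤ) = M p + N.effect σ p := by
  induction h with
  | nil => simp [effect_zero]
  | cons ht hM' _ ih =>
    rw [ih, ht.natCast_fire hM', ← Multiset.cons_coe, effect_cons]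
    ring

end Firing

section Acyclic

variable {TI : Set T}

/-- `t` is taken minimal in `m` for the precedence order of the acyclic `TI`-subnet. -/
theorem AcyclicOn.exists_source (hac : N.AcyclicOn TI) {m : Multiset T}
    (hm : ∀ u ∈ m, u ∈ TI) (h0 : m ≠ 0) :
    ∃ t ∈ m, ∀ p, 0 < N.Pre p t → ∀ u ∈ m, N.Post p u = 0 := by
  let R : {u // u ∈ m} → {u // u ∈ m} → Prop :=
    fun a b => Relation.TransGen (N.Arc TI) (.inr a.1) (.inr b.1)
  have : IsTrans _ R := ⟨fun _ _ _ => .trans⟩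
  have : Std.Irrefl R := ⟨fun a => hac _⟩
  have : Finite {u // u ∈ m} := (Multiset.finite_toSet m).to_subtype
  obtain ⟨a, ha⟩ := Multiset.exists_mem_of_ne_zero h0
  obtain ⟨⟨t, ht⟩, -, hmin⟩ :=
    (Finite.wellFounded_of_trans_of_irrefl R).has_min Set.univ ⟨⟨a, ha⟩, trivial⟩
  refine ⟨t, ht, fun p hp u hu => Nat.eq_zero_of_not_pos fun hpost => ?_⟩
  have hup : N.Arc TI (.inr u) (.inl p) := ⟨hm u hu, hpost⟩
  have hpt : N.Arc TI (.inl p) (.inr t) := ⟨hm t ht, hp⟩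
  exact hmin ⟨u, hu⟩ trivial (.tail (.single hup) hpt)

/-- No transition of `m` puts tokens on the input places of `t`, so these places must already
hold enough tokens at `M`. -/
theorem enabled_of_source {M M' : P → ℕ} {m : Multiset T} {t : T}
    (hsrc : ∀ p, 0 < N.Pre p t → ∀ u ∈ t ::ₘ m, N.Post p u = 0)
    (hM' : ∀ p, (M' p : ℤ) = M p + N.effect (t ::ₘ m) p) : N.Enabled M t := by
  intro p
  rcases Nat.eq_zero_or_pos (N.Pre p t) with h | hp
  · omega
  have hC : ∀ u ∈ t ::ₘ m, N.C p u = -N.Pre p u := fun u hu => by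
    simp [C, hsrc p hp u hu]
  have hrest : N.effect m p ≤ 0 := by
    have := Multiset.sum_map_le_sum_map (N.C p) 0 fun u hu => by
      rw [hC u (Multiset.mem_cons_of_mem hu)]
      simp
    simpa [effect] using this
  have := hM' p
  rw [effect_cons, hC t (Multiset.mem_cons_self t m)] at this
  omega

theorem AcyclicOn.exists_fires (hac : N.AcyclicOn TI) (m : Multiset T) (hm : ∀ u ∈ m, u ∈ TI)
    {M M' : P → ℕ} (hM' : ∀ p, (M' p : ℤ) = M p + N.effect m p) :
    ∃ σ : List T, (σ : Multiset T) = m ∧ N.Fires M σ M' := by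
  induction m using Multiset.strongInductionOn generalizing M with
  | ih m ih =>
  rcases eq_or_ne m 0 with rfl | h0
  · obtain rfl : M' = M := funext fun p => by simpa [effect_zero] using hM' p
    exact ⟨[], rfl, .nil _⟩
  obtain ⟨t, ht, hsrc⟩ := hac.exists_source hm h0
  obtain ⟨m, rfl⟩ := Multiset.exists_cons_of_mem ht
  have hen : N.Enabled M t := enabled_of_source hsrc hM'
  obtain ⟨σ, rfl, hσ⟩ := ih m (Multiset.lt_cons_self m t)
    (fun u hu => hm u (Multiset.mem_cons_of_mem hu))
    (M := fun p => M p + N.Post p t - N.Pre p t) fun p => by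
      rw [hM' p, effect_cons, hen.natCast_fire (fun _ => rfl) p]
      ring
  exact ⟨t :: σ, rfl, .cons hen (fun _ => rfl) hσ⟩

end Acyclic

section Explanations

variable [DecidableEq T] {TI : Set T} {M : P → ℕ} {t : T} {σ : List T}

theorem coe_lt_coe_iff_count {l l' : List T} :
    (l : Multiset T) < l' ↔
      (∀ u, l.count u ≤ l'.count u) ∧ ∃ u, l'.count u ≠ l.count u := by
  rw [lt_iff_le_and_ne, Multiset.le_iff_count, Ne, Multiset.ext]
  simp only [Multiset.coe_count, not_forall, ne_comm]

theorem mem_explMin_iff :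
    σ ∈ N.ExplMin TI M t ↔
      σ ∈ N.Expl TI M t ∧ ∀ σ' ∈ N.Expl TI M t, ¬ (σ' : Multiset T) < σ := by
  simp [ExplMin, coe_lt_coe_iff_count, ne_comm]

theorem mem_explMax_iff :
    σ ∈ N.ExplMax TI M t ↔
      σ ∈ N.Expl TI M t ∧ ∀ σ' ∈ N.Expl TI M t, ¬ (σ : Multiset T) < σ' := by
  simp [ExplMax, coe_lt_coe_iff_count]

theorem mem_implMax_iff :
    σ ∈ N.ImplMax TI M ↔ (∀ u ∈ σ, u ∈ TI) ∧ (∃ M', N.Fires M σ M') ∧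
      ∀ σ' : List T, (∀ u ∈ σ', u ∈ TI) → (∃ M', N.Fires M σ' M') →
        ¬ (σ : Multiset T) < σ' := by
  simp [ImplMax, coe_lt_coe_iff_count]

theorem exists_mem_explMin_le {τ : List T} (hτ : τ ∈ N.Expl TI M t) :
    ∃ σ ∈ N.ExplMin TI M t, (σ : Multiset T) ≤ τ := by
  obtain ⟨_, ⟨σ, ⟨hσ, hστ⟩, rfl⟩, hmin⟩ := wellFounded_lt.has_min
    (((↑) : List T → Multiset T) '' {σ | σ ∈ N.Expl TI M t ∧ (σ : Multiset T) ≤ τ})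
    ⟨τ, τ, ⟨hτ, le_rfl⟩, rfl⟩
  exact ⟨σ, mem_explMin_iff.2 ⟨hσ, fun σ' hσ' hlt =>
    hmin σ' ⟨σ', ⟨hσ', hlt.le.trans hστ⟩, rfl⟩ hlt⟩, hστ⟩

end Explanations

section Reachability

variable [Fintype T] [DecidableEq T] {TE TI : Set T} {M0 : P → ℕ}

theorem Basis.minimax {M : P → ℕ} (h : N.Basis TE TI M0 M) : N.Minimax TE TI M0 M := by
  induction h with
  | base => exact .base
  | step _ ht hy hM' ih => exact .step ih ht (.inl hy) hM'

theorem exists_basis_reachI_of_fire (hbp : N.IsBasisPartition TE TI) {Mb M M₁ : P → ℕ} {t : T}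
    (hMb : N.Basis TE TI M0 Mb) (hM : M ∈ N.ReachI TI Mb) (ht : N.Enabled M t)
    (hM₁ : ∀ p, M₁ p = M p + N.Post p t - N.Pre p t) :
    ∃ Mb', N.Basis TE TI M0 Mb' ∧ M₁ ∈ N.ReachI TI Mb' := by
  obtain ⟨τ, hτI, hτ⟩ := hM
  by_cases htI : t ∈ TI
  · refine ⟨Mb, hMb, τ ++ [t], ?_, hτ.append (.cons ht hM₁ (.nil _))⟩
    simpa [or_imp, forall_and] using ⟨hτI, htI⟩
  have hτ_expl : τ ∈ N.Expl TI Mb t := ⟨hτI, M, hτ, ht⟩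
  obtain ⟨σ, hσmin, hστ⟩ := exists_mem_explMin_le hτ_expl
  obtain ⟨-, K, hK, hKt⟩ := hσmin.1
  let Kt : P → ℕ := fun p => K p + N.Post p t - N.Pre p t
  have hKt₁ := Enabled.natCast_fire (N := N) hKt (M' := Kt) fun _ => rfl
  refine ⟨Kt, .step hMb ((hbp.1 t).2 htI) ⟨σ, hσmin, fun _ => rfl⟩ fun p => ?_, ?_⟩
  · rw [hKt₁, hK.state_equation, sum_C_mul_count]
  obtain ⟨ρ, hρ, hfire⟩ := hbp.2.exists_fires ((τ : Multiset T) - σ)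
    (fun u hu => hτI u (Multiset.mem_of_le tsub_le_self hu)) (M := Kt) (M' := M₁) fun p => by
      rw [hKt₁ p, effect_tsub hστ, ht.natCast_fire hM₁, hK.state_equation, hτ.state_equation]
      ring
  refine ⟨ρ, fun u hu => ?_, hfire⟩
  rw [← Multiset.mem_coe, hρ] at hu
  exact hτI u (Multiset.mem_of_le tsub_le_self hu)

theorem exists_basis_reachI_of_mem_reach (hbp : N.IsBasisPartition TE TI) {M : P → ℕ}
    (hM : M ∈ N.Reach M0) : ∃ Mb, N.Basis TE TI M0 Mb ∧ M ∈ N.ReachI TI Mb := by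
  obtain ⟨σ, hσ⟩ := hM
  suffices ∀ {K M : P → ℕ} {σ : List T}, N.Fires K σ M →
      (∃ Mb, N.Basis TE TI M0 Mb ∧ K ∈ N.ReachI TI Mb) →
      ∃ Mb, N.Basis TE TI M0 Mb ∧ M ∈ N.ReachI TI Mb from
    this hσ ⟨M0, .base, [], by simp, .nil M0⟩
  intro K M σ h
  induction h with
  | nil => exact id
  | cons ht hM' _ ih =>
    rintro ⟨Mb, hMb, hK⟩
    exact ih (exists_basis_reachI_of_fire hbp hMb hK ht hM')

end Reachability

section Deadness

variable [DecidableEq T] {TE TI : Set T} {Mb M : P → ℕ} {σ : List T}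

theorem mem_implMax_of_dead (hac : N.AcyclicOn TI) (hσI : ∀ u ∈ σ, u ∈ TI)
    (hσ : N.Fires Mb σ M) (hdead : N.Dead M) : σ ∈ N.ImplMax TI Mb := by
  refine mem_implMax_iff.2 ⟨hσI, ⟨M, hσ⟩, fun σ' hσ'I ⟨M', hσ'⟩ hlt => ?_⟩
  obtain ⟨ρ, hρ, hfire⟩ := hac.exists_fires ((σ' : Multiset T) - σ)
    (fun u hu => hσ'I u (Multiset.mem_of_le tsub_le_self hu)) (M := M) (M' := M') fun p => by
      rw [effect_tsub hlt.le, hσ'.state_equation, hσ.state_equation]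
      ring
  cases hfire with
  | nil => exact (tsub_pos_of_lt hlt).ne' hρ.symm
  | cons ht _ _ => exact hdead _ ht

theorem dead_of_mem_implMax (hTE : ∀ t, t ∉ TI → t ∈ TE) (hσ : σ ∈ N.ImplMax TI Mb)
    (hfire : N.Fires Mb σ M) (hexpl : ∀ t ∈ TE, σ ∉ N.ExplMax TI Mb t) : N.Dead M := by
  obtain ⟨hσI, -, hmax⟩ := mem_implMax_iff.1 hσ
  intro t ht
  by_cases htI : t ∈ TI
  · refine hmax (σ ++ [t]) (by simpa [or_imp, forall_and] using ⟨hσI, htI⟩)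
      ⟨_, hfire.append (.singleton ht)⟩ ?_
    rw [Multiset.coe_eq_coe.2 (List.perm_append_singleton t σ)]
    exact Multiset.lt_cons_self _ t
  · have hnotmax := hexpl t (hTE t htI)
    simp only [mem_explMax_iff, not_and, not_forall, not_not] at hnotmax
    obtain ⟨σ', ⟨hσ'I, M', hσ', -⟩, hlt⟩ := hnotmax ⟨hσI, M, hfire, ht⟩
    exact hmax σ' hσ'I ⟨M', hσ'⟩ hlt

end Deadness

end PetriNet

open PetriNet in
theorem statement13_general {P T : Type} [Fintype T] [DecidableEq T]
    (N : PetriNet P T) (M0 : P → ℕ) (TE TI : Set T)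
    (hbp : N.IsBasisPartition TE TI)
    (M : P → ℕ) (hM : M ∈ N.Reach M0) :
    N.Dead M ↔
      ∃ (Mb : P → ℕ) (σ : List T), N.Minimax TE TI M0 Mb ∧
        σ ∈ N.ImplMax TI Mb ∧ N.Fires Mb σ M ∧
        ∀ t ∈ TE, σ ∉ N.ExplMax TI Mb t := by
  constructor
  · intro hdead
    obtain ⟨Mb, hMb, τ, hτI, hτ⟩ := exists_basis_reachI_of_mem_reach hbp hM
    refine ⟨Mb, τ, hMb.minimax, mem_implMax_of_dead hbp.2 hτI hτ hdead, hτ,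
      fun t _ hmax => ?_⟩
    obtain ⟨-, M', hM', hPre⟩ := hmax.1
    exact hdead t (hM'.unique hτ ▸ hPre)
  · rintro ⟨Mb, σ, -, hσ, hfire, hexpl⟩
    exact dead_of_mem_implMax (fun t => (hbp.1 t).2) hσ hfire hexpl

open PetriNet in
/-- **Proposition 7.** A reachable marking `M` is dead iff it is
reached from some minimax basis marking `M_b` by a maximal implicit firing
sequence `σ` which is not a maximal explanation of any explicit transition at
`M_b`. -/
theorem statement13 {P T : Type} [Fintype T] [DecidableEq T]
    (N : PetriNet P T) (M0 : P → ℕ) (TE TI : Set T)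
    (hbp : N.IsBasisPartition TE TI) (hbnd : N.Bounded M0)
    (M : P → ℕ) (hM : M ∈ N.Reach M0) :
    N.Dead M ↔
      ∃ (Mb : P → ℕ) (σ : List T), N.Minimax TE TI M0 Mb ∧
        σ ∈ N.ImplMax TI Mb ∧ N.Fires Mb σ M ∧
        ∀ t ∈ TE, σ ∉ N.ExplMax TI Mb t :=
  statement13_general N M0 TE TI hbp M hM
end
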